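/- arXiv:1307.7113 — 2 statements merged into one kernel-verified Lean document; each statement's English description precedes it below -/
import Mathlib

section
/- For every positive integer n, there is a bijection between the set of subgroups of index n of Γ̄(2) (the image of Γ(2) in PSL₂(ℤ)) and the set of equivalence classes of triples (σ, α, x), where σ and α are permutations of Fin n whose generated subgroup acts transitively on Fin n and x ∈ Fin n, with two triples (σ, α, x) and (σ', α', x') equivalent if and only if there exists a permutation π of Fin n with σ' = πσπ⁻¹, α' = παπ⁻¹, and x' = π(x). -/
/-- `SL(2, ℤ)`. -/
abbrev SL2Z := Matrix.SpecialLinearGroup (Fin 2) ℤ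

/-- `PSL₂(ℤ)`, the quotient of `SL(2, ℤ)` by its center `{±I}`. -/
abbrev PSL2Z := SL2Z ⧸ Subgroup.center SL2Z

/-- The projection `SL(2, ℤ) → PSL₂(ℤ)`. -/
def projSL : SL2Z →* PSL2Z := QuotientGroup.mk' (Subgroup.center SL2Z)

/-- `Γ̄(N)`, the image of the principal congruence subgroup `Γ(N)` in `PSL₂(ℤ)`. -/
def GammaBar (N : ℕ) : Subgroup PSL2Z := (CongruenceSubgroup.Gamma N).map projSL

/-- The matrix `A = [[1,2],[0,1]]` in `SL(2, ℤ)`. -/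
def matA : SL2Z := ⟨!![1, 2; 0, 1], by norm_num [Matrix.det_fin_two_of]⟩

/-- The matrix `B = [[1,0],[2,1]]` in `SL(2, ℤ)`. -/
def matB : SL2Z := ⟨!![1, 0; 2, 1], by norm_num [Matrix.det_fin_two_of]⟩

/-- The matrix `T = [[1,1],[0,1]]` in `SL(2, ℤ)`. -/
def matT : SL2Z := ⟨!![1, 1; 0, 1], by norm_num [Matrix.det_fin_two_of]⟩

/-- The matrix `L = [[1,0],[1,1]]` in `SL(2, ℤ)`. -/
def matL : SL2Z := ⟨!![1, 0; 1, 1], by norm_num [Matrix.det_fin_two_of]⟩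

/-- `Ā`, the image of `A` in `PSL₂(ℤ)`. -/
def Abar : PSL2Z := projSL matA

/-- `B̄`, the image of `B` in `PSL₂(ℤ)`. -/
def Bbar : PSL2Z := projSL matB


/-- Triples `(σ, α, x)` of two permutations of `Fin n` generating a subgroup acting
transitively on `Fin n`, together with a marked point `x`. -/
def TransTriple (n : ℕ) :=
  {t : Equiv.Perm (Fin n) × Equiv.Perm (Fin n) × Fin n //
    ∀ i j : Fin n, ∃ π ∈ Subgroup.closure ({t.1, t.2.1} : Set (Equiv.Perm (Fin n))), π i = j}

/-- Two triples are equivalent iff they are simultaneously conjugate by a permutation. -/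
def TripleRel (n : ℕ) (t t' : TransTriple n) : Prop :=
  ∃ π : Equiv.Perm (Fin n),
    t'.1.1 = π * t.1.1 * π⁻¹ ∧ t'.1.2.1 = π * t.1.2.1 * π⁻¹ ∧ t'.1.2.2 = π t.1.2.2

/-!
`A` and `B` act on slopes `z = x / y` by `z ↦ z + 2` and `z⁻¹ ↦ z⁻¹ + 2`, so ping-pong on the
intervals `(1, ∞]`, `[-∞, -1]`, `[0, 1]`, `(-1, 0)` shows that they generate a free subgroup of
`SL(2, ℤ)`. A Euclidean descent on the first column shows that `Γ(2)` is generated by `-1`, `A`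
and `B`. Since central elements of `SL(2, ℤ)` square to `1` and free groups are torsion-free,
`Γ̄(2)` is free on `Ā`, `B̄`.

For a free group on two generators, a subgroup `H` of index `n` gives the action on `G ⧸ H ≅ Fin n`
marked at the coset `H`; the images of the generators form a transitive triple. Conversely, a
transitive triple defines an action whose point stabilizer has index `n` by orbit-stabilizer. Two
transitive marked actions with the same stabilizer `H` are both isomorphic to `G ⧸ H`, hence
conjugate.
-/

open Matrix CongruenceSubgroup

lemma matA_smul (v : Fin 2 → ℤ) : matA • v = ![v 0 + 2 * v 1, v 1] := by
  change (matA : Matrix (Fin 2) (Fin 2) ℤ) *ᵥ v = _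
  ext i
  fin_cases i <;> simp [matA, mulVec, dotProduct, Fin.sum_univ_two]

lemma matB_smul (v : Fin 2 → ℤ) : matB • v = ![v 0, v 1 + 2 * v 0] := by
  change (matB : Matrix (Fin 2) (Fin 2) ℤ) *ᵥ v = _
  ext i
  fin_cases i <;> simp [matB, mulVec, dotProduct, Fin.sum_univ_two, add_comm]

lemma matA_inv_smul (v : Fin 2 → ℤ) : matA⁻¹ • v = ![v 0 - 2 * v 1, v 1] := by
  rw [inv_smul_eq_iff, matA_smul]
  ext i
  fin_cases i <;> simp

lemma matB_inv_smul (v : Fin 2 → ℤ) : matB⁻¹ • v = ![v 0, v 1 - 2 * v 0] := by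
  rw [inv_smul_eq_iff, matB_smul]
  ext i
  fin_cases i <;> simp

-- `0` is fixed by all of `SL(2, ℤ)`, so it could not lie in any ping-pong set.
def nonzeroVectors : SubMulAction SL2Z (Fin 2 → ℤ) where
  carrier := {v | v ≠ 0}
  smul_mem' g _ hv := (smul_ne_zero_iff_ne g).mpr hv

lemma nonzeroVectors_apply_ne_zero (v : nonzeroVectors) : v.1 0 ≠ 0 ∨ v.1 1 ≠ 0 := by
  by_contra! h
  exact v.2 (funext (Fin.forall_fin_two.2 h))

/-- The slope intervals `(1, ∞]` and `[0, 1]`. -/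
def pingPongX : Bool → Set nonzeroVectors
  | true => {v | 0 ≤ v.1 1 ∧ v.1 1 < v.1 0 ∨ v.1 0 < v.1 1 ∧ v.1 1 ≤ 0}
  | false => {v | 0 ≤ v.1 0 ∧ v.1 0 ≤ v.1 1 ∨ v.1 1 ≤ v.1 0 ∧ v.1 0 ≤ 0}

/-- The slope intervals `[-∞, -1]` and `(-1, 0)`. -/
def pingPongY : Bool → Set nonzeroVectors
  | true => {v | 0 < v.1 1 ∧ v.1 0 ≤ -v.1 1 ∨ v.1 1 < 0 ∧ -v.1 1 ≤ v.1 0}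
  | false => {v | 0 < v.1 0 ∧ v.1 0 < -v.1 1 ∨ -v.1 1 < v.1 0 ∧ v.1 0 < 0}

def sanovHom : FreeGroup Bool →* SL2Z := FreeGroup.lift fun b => cond b matA matB

theorem sanovHom_injective : Function.Injective sanovHom := by
  refine FreeGroup.injective_lift_of_ping_pong _ pingPongX pingPongY ?_ ?_ ?_ ?_ ?_ ?_
  · rintro (_ | _)
    · exact ⟨⟨![0, 1], show (![0, 1] : Fin 2 → ℤ) ≠ 0 by decide⟩, by simp [pingPongX]⟩
    · exact ⟨⟨![1, 0], show (![1, 0] : Fin 2 → ℤ) ≠ 0 by decide⟩, by simp [pingPongX]⟩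
  · rintro (_ | _) (_ | _) h <;> simp only [ne_eq, not_true_eq_false] at h <;>
      refine Set.disjoint_left.mpr fun v h1 h2 => ?_ <;>
      simp only [pingPongX, Set.mem_ofPred_eq] at h1 h2 <;> omega
  · rintro (_ | _) (_ | _) h <;> simp only [ne_eq, not_true_eq_false] at h <;>
      refine Set.disjoint_left.mpr fun v h1 h2 => ?_ <;>
      simp only [pingPongY, Set.mem_ofPred_eq] at h1 h2 <;> omega
  · rintro (_ | _) (_ | _) <;> refine Set.disjoint_left.mpr fun v h1 h2 => ?_ <;>
      simp only [pingPongX, pingPongY, Set.mem_ofPred_eq] at h1 h2 <;> omega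
  · rintro (_ | _) <;> refine Set.smul_set_subset_iff.mpr fun v hv => ?_ <;>
      have := nonzeroVectors_apply_ne_zero v <;>
      simp only [pingPongX, pingPongY, Set.mem_compl_iff, Set.mem_ofPred_eq, cond_true, cond_false,
        SetLike.val_smul, matA_smul, matB_smul, cons_val_zero, cons_val_one, cons_val_fin_one]
        at hv ⊢ <;> omega
  · rintro (_ | _) <;> refine Set.smul_set_subset_iff.mpr fun v hv => ?_ <;>
      have := nonzeroVectors_apply_ne_zero v <;>
      simp only [pingPongX, pingPongY, Set.mem_compl_iff, Set.mem_ofPred_eq, Pi.inv_apply,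
        cond_true, cond_false, SetLike.val_smul, matA_inv_smul, matB_inv_smul, cons_val_zero,
        cons_val_one, cons_val_fin_one] at hv ⊢ <;> omega

lemma mem_Gamma_two_iff {M : SL2Z} :
    M ∈ Gamma 2 ↔ M 0 0 % 2 = 1 ∧ M 0 1 % 2 = 0 ∧ M 1 0 % 2 = 0 ∧ M 1 1 % 2 = 1 := by
  simp only [Gamma_mem, ← Int.cast_one (R := ZMod 2), ← Int.cast_zero (R := ZMod 2),
    ZMod.intCast_eq_intCast_iff']
  norm_num

lemma matA_eq_T_sq : matA = ModularGroup.T ^ (2 : ℤ) := by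
  ext : 1
  rw [ModularGroup.coe_T_zpow]
  rfl

lemma eq_T_zpow_of_c_eq_zero {M : SL2Z} (hc : M 1 0 = 0) (ha : M 0 0 = 1) :
    M = ModularGroup.T ^ M 0 1 := by
  have hd : M 1 1 = 1 := by
    have hdet := M.2
    rw [det_fin_two, hc, ha] at hdet
    simpa using hdet
  ext i j
  fin_cases i <;> fin_cases j <;> simp [ModularGroup.coe_T_zpow, hc, ha, hd]

lemma mul_apply_zero_eq_smul (g M : SL2Z) (i : Fin 2) : (g * M) i 0 = (g • fun k => M k 0) i := by
  change _ = ((g : Matrix (Fin 2) (Fin 2) ℤ) *ᵥ _) i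
  simp [mul_apply, mulVec, dotProduct]

lemma exists_generator_smul_natAbs_lt {v : Fin 2 → ℤ} (h0 : v 0 % 2 = 1) (h1 : v 1 % 2 = 0)
    (hne : v 1 ≠ 0) : ∃ g ∈ ({matA, matA⁻¹, matB, matB⁻¹} : Set SL2Z),
      ((g • v) 0).natAbs + ((g • v) 1).natAbs < (v 0).natAbs + (v 1).natAbs := by
  simp only [Set.mem_insert_iff, Set.mem_singleton_iff, exists_eq_or_imp, exists_eq_left,
    matA_smul, matA_inv_smul, matB_smul, matB_inv_smul, cons_val_zero, cons_val_one,
    cons_val_fin_one]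
  omega

lemma mem_closure_of_c_eq_zero {M : SL2Z} (hM : M ∈ Gamma 2) (hc : M 1 0 = 0) :
    M ∈ Subgroup.closure {-1, matA, matB} := by
  obtain ⟨-, hb, -, -⟩ := mem_Gamma_two_iff.mp hM
  have hdet : M 0 0 * M 1 1 = 1 := by
    have hdet := M.2
    rw [det_fin_two, hc] at hdet
    simpa using hdet
  have mem_of_a_eq_one : ∀ N : SL2Z, N 1 0 = 0 → N 0 0 = 1 → N 0 1 % 2 = 0 →
      N ∈ Subgroup.closure {-1, matA, matB} := by
    intro N hc ha hb
    rw [eq_T_zpow_of_c_eq_zero hc ha, ← Int.ediv_mul_cancel (Int.dvd_of_emod_eq_zero hb),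
      mul_comm, _root_.zpow_mul, ← matA_eq_T_sq]
    exact Subgroup.zpow_mem _ (Subgroup.subset_closure (by simp)) _
  rcases Int.eq_one_or_neg_one_of_mul_eq_one hdet with ha | ha
  · exact mem_of_a_eq_one M hc ha hb
  · rw [show M = -1 * -M by rw [neg_one_mul, neg_neg]]
    refine Subgroup.mul_mem _ (Subgroup.subset_closure (by simp))
      (mem_of_a_eq_one _ (by simp [hc]) (by simp [ha]) ?_)
    simp only [SpecialLinearGroup.coe_neg, neg_apply]
    omega

theorem closure_le_Gamma_two : Subgroup.closure {-1, matA, matB} ≤ Gamma 2 := by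
  rw [Subgroup.closure_le]
  rintro g (rfl | rfl | rfl) <;> rw [SetLike.mem_coe, mem_Gamma_two_iff] <;> decide

theorem Gamma_two_eq_closure : Gamma 2 = Subgroup.closure {-1, matA, matB} := by
  refine le_antisymm (fun M hM => ?_) closure_le_Gamma_two
  induction hk : (M 0 0).natAbs + (M 1 0).natAbs using Nat.strong_induction_on generalizing M with
  | _ k ih =>
  by_cases hc : M 1 0 = 0
  · exact mem_closure_of_c_eq_zero hM hc
  obtain ⟨ha, -, hc2, -⟩ := mem_Gamma_two_iff.mp hM
  obtain ⟨g, hg, hlt⟩ := exists_generator_smul_natAbs_lt (v := fun k => M k 0) ha hc2 hc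
  have hgS : g ∈ Subgroup.closure {-1, matA, matB} := by
    have hA : matA ∈ Subgroup.closure {-1, matA, matB} := Subgroup.subset_closure (by simp)
    have hB : matB ∈ Subgroup.closure {-1, matA, matB} := Subgroup.subset_closure (by simp)
    rcases hg with rfl | rfl | rfl | rfl
    exacts [hA, inv_mem hA, hB, inv_mem hB]
  rw [← inv_mul_cancel_left g M]
  refine Subgroup.mul_mem _ (Subgroup.inv_mem _ hgS)
    (ih _ (hk ▸ ?_) _ (Subgroup.mul_mem _ (closure_le_Gamma_two hgS) hM) rfl)
  simpa only [mul_apply_zero_eq_smul] using hlt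

theorem Matrix.SpecialLinearGroup.pow_card_eq_one_of_mem_center {n R : Type*} [Fintype n]
    [DecidableEq n] [CommRing R] {M : SpecialLinearGroup n R}
    (hM : M ∈ Subgroup.center (SpecialLinearGroup n R)) : M ^ Fintype.card n = 1 := by
  obtain ⟨r, hr, hrM⟩ := SpecialLinearGroup.mem_center_iff.mp hM
  ext : 1
  rw [SpecialLinearGroup.coe_pow, ← hrM, ← map_pow, hr, map_one, SpecialLinearGroup.coe_one]

lemma range_cond {β : Type*} (a b : β) : Set.range (fun c : Bool => cond c a b) = {a, b} := by
  ext
  simp [or_comm, eq_comm]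

def gammaBarTwoHom : FreeGroup Bool →* PSL2Z := FreeGroup.lift fun b => cond b Abar Bbar

lemma gammaBarTwoHom_eq : gammaBarTwoHom = projSL.comp sanovHom :=
  FreeGroup.ext_hom _ _ fun b => by cases b <;> rfl

theorem gammaBarTwoHom_injective : Function.Injective gammaBarTwoHom := by
  rw [injective_iff_map_eq_one]
  intro w hw
  rw [gammaBarTwoHom_eq, MonoidHom.comp_apply, projSL, QuotientGroup.mk'_apply,
    QuotientGroup.eq_one_iff] at hw
  have hsq : sanovHom (w ^ 2) = sanovHom 1 := by
    rw [map_pow, map_one]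
    simpa using SpecialLinearGroup.pow_card_eq_one_of_mem_center hw
  exact sq_eq_one.mp (sanovHom_injective hsq)

theorem range_gammaBarTwoHom : gammaBarTwoHom.range = GammaBar 2 := by
  have hneg : projSL (-1) = 1 :=
    (QuotientGroup.eq_one_iff _).mpr (Subgroup.mem_center_iff.mpr fun g => by simp)
  rw [gammaBarTwoHom, FreeGroup.range_lift_eq_closure, range_cond, GammaBar, Gamma_two_eq_closure,
    MonoidHom.map_closure, Set.image_insert_eq, Set.image_pair, hneg, Subgroup.closure_insert_one]
  rfl

noncomputable def gammaBarTwoEquiv : FreeGroup Bool ≃* GammaBar 2 :=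
  (MonoidHom.ofInjective gammaBarTwoHom_injective).trans
    (MulEquiv.subgroupCongr range_gammaBarTwoHom)

section PointStabilizer

variable {G α : Type*} [Group G]

def pointStabilizer (ρ : G →* Equiv.Perm α) (x : α) : Subgroup G :=
  (MulAction.stabilizer (Equiv.Perm α) x).comap ρ

@[simp]
lemma mem_pointStabilizer {ρ : G →* Equiv.Perm α} {x : α} {g : G} :
    g ∈ pointStabilizer ρ x ↔ ρ g x = x :=
  Iff.rfl

lemma pointStabilizer_conj {ρ ρ' : G →* Equiv.Perm α} {π : Equiv.Perm α}
    (hρ : ∀ g, ρ' g = π * ρ g * π⁻¹) (x : α) :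
    pointStabilizer ρ' (π x) = pointStabilizer ρ x := by
  ext g
  simp [hρ, Equiv.Perm.mul_apply]

lemma pointStabilizer_eq_of_equivariant {ρ : G →* Equiv.Perm α} {H : Subgroup G}
    (θ : G ⧸ H ≃ α) (hθ : ∀ (g : G) c, θ (g • c) = ρ g (θ c)) :
    pointStabilizer ρ (θ (1 : G)) = H := by
  ext g
  rw [mem_pointStabilizer, ← hθ, θ.apply_eq_iff_eq, ← MulAction.mem_stabilizer_iff,
    MulAction.stabilizer_quotient]

lemma exists_conj_of_equivariant {ρ ρ' : G →* Equiv.Perm α} {H : Subgroup G}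
    (θ θ' : G ⧸ H ≃ α) (hθ : ∀ (g : G) c, θ (g • c) = ρ g (θ c))
    (hθ' : ∀ (g : G) c, θ' (g • c) = ρ' g (θ' c)) :
    ∃ π : Equiv.Perm α, (∀ g, ρ' g = π * ρ g * π⁻¹) ∧ θ' (1 : G) = π (θ (1 : G)) := by
  refine ⟨θ.symm.trans θ', fun g => Equiv.ext fun y => ?_, by simp⟩
  obtain ⟨c, rfl⟩ := θ'.surjective y
  simp [Equiv.Perm.mul_apply, Equiv.Perm.inv_def, ← hθ, ← hθ']

lemma exists_equivariant_equiv (ρ : G →* Equiv.Perm α) (x : α) (hρ : ∀ y, ∃ g, ρ g x = y) :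
    ∃ θ : G ⧸ pointStabilizer ρ x ≃ α, θ (1 : G) = x ∧ ∀ (g : G) c, θ (g • c) = ρ g (θ c) := by
  let := MulAction.compHom α ρ
  have hsurj : Function.Surjective (MulAction.ofQuotientStabilizer G x) := fun y =>
    (hρ y).elim fun g hg => ⟨g, hg⟩
  exact ⟨Equiv.ofBijective _ ⟨MulAction.injective_ofQuotientStabilizer G x, hsurj⟩,
    one_smul G x, MulAction.ofQuotientStabilizer_smul G x⟩

lemma index_pointStabilizer (ρ : G →* Equiv.Perm α) (x : α) (hρ : ∀ y, ∃ g, ρ g x = y) :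
    (pointStabilizer ρ x).index = Nat.card α := by
  obtain ⟨θ, -⟩ := exists_equivariant_equiv ρ x hρ
  exact Nat.card_congr θ

def quotientPermHom {H : Subgroup G} (q : G ⧸ H ≃ α) : G →* Equiv.Perm α :=
  q.permCongrHom.toMonoidHom.comp (MulAction.toPermHom G (G ⧸ H))

lemma quotientPermHom_equivariant {H : Subgroup G} (q : G ⧸ H ≃ α) (g : G) (c : G ⧸ H) :
    q (g • c) = quotientPermHom q g (q c) := by
  simp [quotientPermHom, Equiv.permCongrHom, Equiv.permCongr_apply]

lemma quotientPermHom_transitive {H : Subgroup G} (q : G ⧸ H ≃ α) (x y : α) :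
    ∃ g, quotientPermHom q g x = y := by
  obtain ⟨g, hg⟩ := MulAction.exists_smul_eq G (q.symm x) (q.symm y)
  exact ⟨g, by rw [← q.apply_symm_apply x, ← quotientPermHom_equivariant, hg, q.apply_symm_apply]⟩

end PointStabilizer

section FreeGroupBool

variable {G P : Type*} [Group G] [Group P] (e : FreeGroup Bool ≃* G)

lemma closure_freeGroupEquiv_generators :
    Subgroup.closure {e (.of true), e (.of false)} = ⊤ := by
  have : ({e (.of true), e (.of false)} : Set G) = e.toMonoidHom '' Set.range FreeGroup.of := by
    rw [← Set.range_comp]; ext; simp [or_comm]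
  rw [this, ← MonoidHom.map_closure, FreeGroup.closure_range_of, ← MonoidHom.range_eq_map]
  exact MonoidHom.range_eq_top.mpr e.surjective

lemma range_eq_closure_freeGroupEquiv_generators (ρ : G →* P) :
    ρ.range = Subgroup.closure {ρ (e (.of true)), ρ (e (.of false))} := by
  rw [MonoidHom.range_eq_map, ← closure_freeGroupEquiv_generators e, MonoidHom.map_closure,
    Set.image_pair]

lemma hom_ext_freeGroupEquiv {ρ ρ' : G →* P} (htrue : ρ (e (.of true)) = ρ' (e (.of true)))
    (hfalse : ρ (e (.of false)) = ρ' (e (.of false))) : ρ = ρ' :=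
  MonoidHom.eq_of_eqOn_dense (closure_freeGroupEquiv_generators e) <| by
    rintro _ (rfl | rfl)
    exacts [htrue, hfalse]

end FreeGroupBool

namespace TransTriple

variable {G : Type*} [Group G] (e : FreeGroup Bool ≃* G) {n : ℕ}

def toHom (t : TransTriple n) : G →* Equiv.Perm (Fin n) :=
  (FreeGroup.lift fun b => cond b t.1.1 t.1.2.1).comp e.symm.toMonoidHom

@[simp]
lemma toHom_true (t : TransTriple n) : t.toHom e (e (.of true)) = t.1.1 := by
  simp [toHom]

@[simp]
lemma toHom_false (t : TransTriple n) : t.toHom e (e (.of false)) = t.1.2.1 := by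
  simp [toHom]

lemma exists_toHom_apply_eq (t : TransTriple n) (i j : Fin n) : ∃ g, t.toHom e g i = j := by
  obtain ⟨π, hπ, hij⟩ := t.2 i j
  rw [← toHom_true e, ← toHom_false e, ← range_eq_closure_freeGroupEquiv_generators] at hπ
  obtain ⟨g, rfl⟩ := hπ
  exact ⟨g, hij⟩

def ofHom (ρ : G →* Equiv.Perm (Fin n)) (x : Fin n) (hρ : ∀ i j, ∃ g, ρ g i = j) : TransTriple n :=
  ⟨(ρ (e (.of true)), ρ (e (.of false)), x), fun i j => by
    obtain ⟨g, hg⟩ := hρ i j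
    exact ⟨ρ g, range_eq_closure_freeGroupEquiv_generators e ρ ▸ ⟨g, rfl⟩, hg⟩⟩

lemma toHom_ofHom (ρ : G →* Equiv.Perm (Fin n)) (x : Fin n) (hρ : ∀ i j, ∃ g, ρ g i = j) :
    (ofHom e ρ x hρ).toHom e = ρ :=
  hom_ext_freeGroupEquiv e (toHom_true e _) (toHom_false e _)

lemma tripleRel_iff (t t' : TransTriple n) :
    TripleRel n t t' ↔ ∃ π : Equiv.Perm (Fin n),
      (∀ g, t'.toHom e g = π * t.toHom e g * π⁻¹) ∧ t'.1.2.2 = π t.1.2.2 := by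
  constructor
  · rintro ⟨π, hσ, hα, hx⟩
    refine ⟨π, fun g => ?_, hx⟩
    have := hom_ext_freeGroupEquiv e (ρ := t'.toHom e)
      (ρ' := (MulAut.conj π).toMonoidHom.comp (t.toHom e)) (by simp [hσ]) (by simp [hα])
    simp [this]
  · rintro ⟨π, hρ, hx⟩
    exact ⟨π, by simpa using hρ (e (.of true)), by simpa using hρ (e (.of false)), hx⟩

end TransTriple

section Correspondence

variable {G : Type*} [Group G] (e : FreeGroup Bool ≃* G) {n : ℕ}

noncomputable def quotientEquivFinOfIndexEq {H : Subgroup G} (hH : H.index = n) (hn : 0 < n) :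
    G ⧸ H ≃ Fin n :=
  have : H.FiniteIndex := ⟨hH ▸ hn.ne'⟩
  Finite.equivFinOfCardEq hH

noncomputable def subgroupIndexEquivTripleQuot (hn : 0 < n) :
    {H : Subgroup G // H.index = n} ≃ Quot (TripleRel n) where
  toFun H :=
    let q := quotientEquivFinOfIndexEq H.2 hn
    Quot.mk _ (TransTriple.ofHom e (quotientPermHom q) (q (1 : G))
      (quotientPermHom_transitive q))
  invFun := Quot.lift
    (fun t => ⟨pointStabilizer (t.toHom e) t.1.2.2, by
      rw [index_pointStabilizer _ _ (t.exists_toHom_apply_eq e _), Nat.card_eq_fintype_card,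
        Fintype.card_fin]⟩)
    (fun t t' h => by
      obtain ⟨π, hρ, hx⟩ := (TransTriple.tripleRel_iff e t t').mp h
      exact Subtype.ext (by simp only [hx, pointStabilizer_conj hρ]))
  left_inv H := Subtype.ext <| by
    simp only [TransTriple.toHom_ofHom]
    exact pointStabilizer_eq_of_equivariant _ (quotientPermHom_equivariant _)
  right_inv := Quot.ind fun t => by
    obtain ⟨θ, hθ1, hθ⟩ := exists_equivariant_equiv (t.toHom e) t.1.2.2
      (t.exists_toHom_apply_eq e _)
    refine (Quot.sound ((TransTriple.tripleRel_iff e _ _).mpr ?_)).symm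
    simp only [TransTriple.toHom_ofHom]
    obtain ⟨π, hρ, hx⟩ := exists_conj_of_equivariant θ _ hθ (quotientPermHom_equivariant _)
    exact ⟨π, hρ, hx.trans (congrArg π hθ1)⟩

end Correspondence

/-- Birch's correspondence: subgroups of index `n` of `Γ̄(2)` are in bijection with
equivalence classes of transitive marked triples of permutations of `Fin n`. -/
theorem birch_correspondence (n : ℕ) (hn : 0 < n) :
    Nonempty ({H : Subgroup (GammaBar 2) // H.index = n} ≃ Quot (TripleRel n)) :=
  ⟨subgroupIndexEquivTripleQuot gammaBarTwoEquiv hn⟩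
end

section
/- Let Γ be a finite-index subgroup of Γ̄(2) in PSL₂(ℤ) which is congruence of level 2n, i.e., 2n is the smallest positive integer N with Γ̄(N) ≤ Γ. Let g be any element of Γ̄(2), and let P be either B̄ or ĀB̄⁻¹ (parabolic elements of Γ̄(2) fixing the cusps 0 and 1, respectively). Let d be the least positive integer with g·Ā^d·g⁻¹ ∈ Γ and e be the least positive integer with g·P^e·g⁻¹ ∈ Γ. Then n divides 2·d·e. -/
/-! Conjugating by a lift of `g` (times `T = [[1,1],[0,1]]` when `P = ĀB̄⁻¹`: `T` commutes with `A`
and `T B T⁻¹ = -A B⁻¹`) puts `[[1,2d],[0,1]]` and `[[1,0],[2e,1]]` into a conjugate of `Γ`, which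
still contains the normal subgroup `Γ̄(2n)`. Modulo `N`, a subgroup of `SL(2, ℤ/N)` containing all
`[[1,ar],[0,1]]` and `[[1,0],[br,1]]` contains every matrix that is `≡ I` modulo `ab`: an upper
unipotent makes the top-left entry `α = 1 + abt` a unit, and then
`[[α,β],[γ,δ]] = [[1,0],[(γ-b)/α,1]] · [[1,at],[0,1]] · [[1,0],[b,1]] · [[1,(β-at)/α],[0,1]]`.
Hence `Γ̄(gcd(2n, 4de)) ≤ Γ`, and minimality of the level `2n` forces `2n ∣ 4de`. -/

open Matrix

namespace SL2

variable {R : Type*} [CommRing R]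

def upper (r : R) : SpecialLinearGroup (Fin 2) R :=
  SpecialLinearGroup.transvection (i := 0) (j := 1) (by decide) r

def lower (r : R) : SpecialLinearGroup (Fin 2) R :=
  SpecialLinearGroup.transvection (i := 1) (j := 0) (by decide) r

@[simp] lemma coe_upper (r : R) : (upper r : Matrix (Fin 2) (Fin 2) R) = !![1, r; 0, 1] := by
  ext i j; fin_cases i <;> fin_cases j <;> simp [upper, SpecialLinearGroup.transvection_coe]

@[simp] lemma coe_lower (r : R) : (lower r : Matrix (Fin 2) (Fin 2) R) = !![1, 0; r, 1] := by
  ext i j; fin_cases i <;> fin_cases j <;> simp [lower, SpecialLinearGroup.transvection_coe]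

lemma upper_add (r s : R) : upper (r + s) = upper r * upper s :=
  SpecialLinearGroup.transvection_add _ r s

lemma lower_add (r s : R) : lower (r + s) = lower r * lower s :=
  SpecialLinearGroup.transvection_add _ r s

lemma upper_inv (r : R) : (upper r)⁻¹ = upper (-r) := SpecialLinearGroup.transvection_inv _ r

lemma lower_inv (r : R) : (lower r)⁻¹ = lower (-r) := SpecialLinearGroup.transvection_inv _ r

@[simp] lemma upper_zero : upper (0 : R) = 1 := SpecialLinearGroup.transvection_coeff_zero _

@[simp] lemma lower_zero : lower (0 : R) = 1 := SpecialLinearGroup.transvection_coeff_zero _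

lemma upper_zpow (r : R) (k : ℤ) : upper r ^ k = upper (r * k) := by
  induction k using Int.induction_on with
  | zero => simp
  | succ k ih =>
    rw [_root_.zpow_add_one, ih, ← upper_add]
    congr 1; push_cast; ring
  | pred k ih =>
    rw [_root_.zpow_sub_one, ih, upper_inv, ← upper_add]
    congr 1; push_cast; ring

lemma lower_zpow (r : R) (k : ℤ) : lower r ^ k = lower (r * k) := by
  induction k using Int.induction_on with
  | zero => simp
  | succ k ih =>
    rw [_root_.zpow_add_one, ih, ← lower_add]
    congr 1; push_cast; ring
  | pred k ih =>
    rw [_root_.zpow_sub_one, ih, lower_inv, ← lower_add]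
    congr 1; push_cast; ring

variable {S : Type*} [CommRing S]

lemma map_upper (f : R →+* S) (r : R) : SpecialLinearGroup.map f (upper r) = upper (f r) := by
  ext i j; fin_cases i <;> fin_cases j <;> simp

lemma map_lower (f : R →+* S) (r : R) : SpecialLinearGroup.map f (lower r) = lower (f r) := by
  ext i j; fin_cases i <;> fin_cases j <;> simp

lemma eq_lower_mul_upper_mul_lower_mul_upper (x : SpecialLinearGroup (Fin 2) R) {a b t u : R}
    (h00 : x 0 0 = 1 + a * t * b) (hu : x 0 0 * u = 1) :
    x = lower ((x 1 0 - b) * u) * upper (a * t) * lower b * upper (u * (x 0 1 - a * t)) := by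
  have hdet : x 0 0 * x 1 1 - x 0 1 * x 1 0 = 1 := by rw [← det_fin_two, x.det_coe]
  have hu' : (1 + a * t * b) * u = 1 := h00 ▸ hu
  ext i j
  fin_cases i <;> fin_cases j <;>
    simp only [Fin.zero_eta, Fin.mk_one, Matrix.SpecialLinearGroup.coe_mul, coe_lower, coe_upper,
      mul_fin_two, of_apply, cons_val', cons_val_zero, cons_val_one, cons_val_fin_one, Fin.isValue]
  · linear_combination h00
  · linear_combination (a * t - x 0 1) * hu'
  · linear_combination (b - x 1 0) * hu'
  · linear_combination -x 1 1 * hu + u * hdet + (1 - (x 1 0 - b) * u * (x 0 1 - a * t)) * hu'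

variable {H : Subgroup (SpecialLinearGroup (Fin 2) R)} {a b : R}

lemma mem_of_isUnit_of_dvd (hU : ∀ r, upper (a * r) ∈ H) (hL : ∀ r, lower (b * r) ∈ H)
    {x : SpecialLinearGroup (Fin 2) R} (hx : IsUnit (x 0 0)) (h01 : a ∣ x 0 1) (h10 : b ∣ x 1 0)
    (h00 : a * b ∣ x 0 0 - 1) : x ∈ H := by
  obtain ⟨t, ht⟩ := h00
  obtain ⟨u, hu⟩ := hx.exists_right_inv
  obtain ⟨β, hβ⟩ := h01
  obtain ⟨γ, hγ⟩ := h10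
  rw [eq_lower_mul_upper_mul_lower_mul_upper x (a := a) (b := b) (t := t)
    (by linear_combination ht) hu]
  refine mul_mem (mul_mem (mul_mem ?_ (hU t)) (by simpa using hL 1)) ?_
  · convert hL ((γ - 1) * u) using 2; rw [hγ]; ring
  · convert hU (u * (β - t)) using 2; rw [hβ]; ring

lemma mem_of_isUnit_add_mul_of_dvd (hU : ∀ r, upper (a * r) ∈ H) (hL : ∀ r, lower (b * r) ∈ H)
    {x : SpecialLinearGroup (Fin 2) R} {k : R} (hx : IsUnit (x 0 0 + a * k * x 1 0))
    (h01 : a ∣ x 0 1) (h10 : b ∣ x 1 0) (h00 : a * b ∣ x 0 0 - 1) : x ∈ H := by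
  have e00 : (upper (a * k) * x) 0 0 = x 0 0 + a * k * x 1 0 := by
    simp [Matrix.mul_apply, Fin.sum_univ_two]
  have e01 : (upper (a * k) * x) 0 1 = x 0 1 + a * k * x 1 1 := by
    simp [Matrix.mul_apply, Fin.sum_univ_two]
  have e10 : (upper (a * k) * x) 1 0 = x 1 0 := by
    simp [Matrix.mul_apply, Fin.sum_univ_two]
  obtain ⟨γ, hγ⟩ := h10
  have hy : upper (a * k) * x ∈ H := by
    refine mem_of_isUnit_of_dvd hU hL (e00 ▸ hx) ?_ (e10 ▸ ⟨γ, hγ⟩) ?_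
    · rw [e01]
      exact dvd_add h01 ⟨k * x 1 1, by ring⟩
    · rw [e00, add_sub_right_comm]
      exact dvd_add h00 ⟨k * γ, by rw [hγ]; ring⟩
  simpa [← mul_assoc, ← upper_add] using mul_mem (hU (-k)) hy

end SL2

lemma Int.exists_isUnit_add_mul {N : ℕ} [NeZero N] {α w : ℤ} (h : IsCoprime α (Int.gcd w N)) :
    ∃ k : ℤ, IsUnit ((α + k * w : ℤ) : ZMod N) := by
  have hdvd : Int.gcd w N ∣ N := Int.natCast_dvd_natCast.mp (Int.gcd_dvd_right _ _)
  obtain ⟨u, hu⟩ := ZMod.unitsMap_surjective hdvd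
    ((ZMod.coe_int_isUnit_iff_isCoprime α _).mpr h.symm).unit
  obtain ⟨U, hU⟩ := ZMod.intCast_surjective (u : ZMod N)
  have hαU : (Int.gcd w N : ℤ) ∣ U - α := by
    rw [← ZMod.intCast_eq_intCast_iff_dvd_sub]
    simpa [ZMod.unitsMap_def, ← hU, ZMod.cast_intCast hdvd] using (congr_arg Units.val hu).symm
  obtain ⟨q, hq⟩ := hαU
  refine ⟨Int.gcdA w N * q, ?_⟩
  have : α + Int.gcdA w N * q * w = U - N * (Int.gcdB w N * q) := by
    linear_combination -hq - q * Int.gcd_eq_gcd_ab w N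
  simp [this, hU]

lemma ZMod.intCast_dvd_of_gcd_dvd {N : ℕ} {c z : ℤ} (hz : (Int.gcd N c : ℤ) ∣ z) :
    (c : ZMod N) ∣ (z : ZMod N) := by
  obtain ⟨t, rfl⟩ := hz
  rw [Int.gcd_eq_gcd_ab]
  push_cast
  simp only [ZMod.natCast_self, zero_mul, zero_add]
  exact (dvd_mul_right _ _).mul_right _

open CongruenceSubgroup SL2
open scoped MatrixGroups

lemma CongruenceSubgroup.dvd_of_mem_Gamma {N : ℕ} {x : SL(2, ℤ)} (hx : x ∈ Gamma N) :
    (N : ℤ) ∣ x 0 0 - 1 ∧ (N : ℤ) ∣ x 0 1 ∧ (N : ℤ) ∣ x 1 0 := by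
  obtain ⟨h00, h01, h10, -⟩ := Gamma_mem.mp hx
  refine ⟨?_, (ZMod.intCast_zmod_eq_zero_iff_dvd _ _).mp h01,
    (ZMod.intCast_zmod_eq_zero_iff_dvd _ _).mp h10⟩
  rw [← ZMod.intCast_eq_intCast_iff_dvd_sub]
  simpa using h00.symm

lemma CongruenceSubgroup.isCoprime_gcd_of_mem_Gamma {N : ℕ} {a b : ℤ} {x : SL(2, ℤ)}
    (hx : x ∈ Gamma (Int.gcd N (a * b))) : IsCoprime (x 0 0) (Int.gcd (a * x 1 0) N) := by
  have hdet : IsCoprime (x 0 0) (x 1 0) :=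
    ⟨x 1 1, -x 0 1, by
      linear_combination (det_fin_two (x : Matrix (Fin 2) (Fin 2) ℤ)).symm.trans x.det_coe⟩
  obtain ⟨t, ht⟩ := (dvd_of_mem_Gamma hx).1
  have hgcd : IsCoprime (x 0 0) (Int.gcd N (a * b)) := ⟨1, -t, by linear_combination ht⟩
  refine (hgcd.mul_right hdet).of_isCoprime_of_dvd_right ?_
  have : (Int.gcd (a * x 1 0) N : ℤ) ∣ Int.gcd (N * x 1 0) (a * b * x 1 0) :=
    Int.dvd_coe_gcd (Int.gcd_dvd_right _ _ |>.mul_right _)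
      ((Int.gcd_dvd_left _ _).trans ⟨b, by ring⟩)
  rw [Int.gcd_mul_right] at this
  push_cast at this
  exact this.trans (mul_dvd_mul_left _ (abs_dvd_self _))

lemma CongruenceSubgroup.Gamma_gcd_le {Δ : Subgroup SL(2, ℤ)} {N : ℕ} [NeZero N] {a b : ℤ}
    (hN : Gamma N ≤ Δ) (ha : upper a ∈ Δ) (hb : lower b ∈ Δ) :
    Gamma (Int.gcd N (a * b)) ≤ Δ := by
  intro x hx
  let red : SL(2, ℤ) →* SL(2, ZMod N) := SpecialLinearGroup.map (Int.castRingHom (ZMod N))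
  have mem_of_map : ∀ y, red y ∈ Δ.map red → y ∈ Δ := by
    rintro y ⟨z, hz, hzy⟩
    have : z⁻¹ * y ∈ Gamma N := by rw [Gamma_mem', map_mul, map_inv, hzy, inv_mul_cancel]
    simpa using mul_mem hz (hN this)
  have hU : ∀ r : ZMod N, upper (a * r) ∈ Δ.map red := by
    intro r
    obtain ⟨k, rfl⟩ := ZMod.intCast_surjective r
    exact ⟨upper a ^ k, zpow_mem ha k, by simp [red, upper_zpow, map_upper]⟩
  have hL : ∀ r : ZMod N, lower (b * r) ∈ Δ.map red := by
    intro r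
    obtain ⟨k, rfl⟩ := ZMod.intCast_surjective r
    exact ⟨lower b ^ k, zpow_mem hb k, by simp [red, lower_zpow, map_lower]⟩
  obtain ⟨k, hk⟩ := Int.exists_isUnit_add_mul (N := N) (isCoprime_gcd_of_mem_Gamma hx)
  obtain ⟨h00, h01, h10⟩ := dvd_of_mem_Gamma hx
  have hab {z : ℤ} (hz : (Int.gcd N (a * b) : ℤ) ∣ z) : (a : ZMod N) * b ∣ (z : ZMod N) := by
    exact_mod_cast ZMod.intCast_dvd_of_gcd_dvd hz
  refine mem_of_map x (mem_of_isUnit_add_mul_of_dvd hU hL (k := (k : ZMod N)) ?_ ?_ ?_ ?_)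
  · simpa [red, mul_assoc, mul_left_comm] using hk
  · simpa [red] using (dvd_mul_right _ _).trans (hab h01)
  · simpa [red] using (dvd_mul_left _ _).trans (hab h10)
  · simpa [red] using hab h00

lemma projSL_neg (g : SL2Z) : projSL (-g) = projSL g := by
  have hcenter : (-1 : SL2Z) ∈ Subgroup.center SL2Z :=
    Subgroup.mem_center_iff.mpr fun h => by ext i j; simp [SpecialLinearGroup.coe_neg]
  have : -g = g * -1 := by ext i j; simp [SpecialLinearGroup.coe_neg]
  rw [this, map_mul, show projSL (-1) = 1 from (QuotientGroup.eq_one_iff _).mpr hcenter, mul_one]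

lemma matA_eq_upper : matA = upper 2 := by
  ext i j; fin_cases i <;> fin_cases j <;> rfl

lemma matB_eq_lower : matB = lower 2 := by
  ext i j; fin_cases i <;> fin_cases j <;> rfl

lemma projSL_upper_two_mul (k : ℕ) : projSL (upper (2 * k)) = Abar ^ k := by
  rw [Abar, matA_eq_upper, ← map_pow, ← zpow_natCast, upper_zpow]; simp

lemma projSL_lower_two_mul (k : ℕ) : projSL (lower (2 * k)) = Bbar ^ k := by
  rw [Bbar, matB_eq_lower, ← map_pow, ← zpow_natCast, lower_zpow]; simp

lemma matT_eq_upper : matT = upper 1 := by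
  ext i j; fin_cases i <;> fin_cases j <;> rfl

lemma matT_conj_upper (r : ℤ) : matT * upper r * matT⁻¹ = upper r := by
  rw [matT_eq_upper, upper_inv, ← upper_add, ← upper_add]
  congr 1; ring

lemma projSL_matT_conj_lower_two_mul (k : ℕ) :
    projSL (matT * lower (2 * k : ℤ) * matT⁻¹) = (Abar * Bbar⁻¹) ^ k := by
  have hbase : matT * lower (2 : ℤ) * matT⁻¹ = -(matA * matB⁻¹) := by
    rw [matT_eq_upper, matA_eq_upper, matB_eq_lower, upper_inv, lower_inv]
    ext i j
    fin_cases i <;> fin_cases j <;>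
      simp [SpecialLinearGroup.coe_neg, Matrix.mul_apply, Fin.sum_univ_two]
  calc projSL (matT * lower (2 * k : ℤ) * matT⁻¹)
      _ = projSL ((matT * lower (2 : ℤ) * matT⁻¹) ^ k) := by
        rw [conj_pow, ← zpow_natCast (lower _), lower_zpow, Int.cast_natCast]
      _ = (Abar * Bbar⁻¹) ^ k := by
        rw [hbase, map_pow, projSL_neg, map_mul, map_inv, Abar, Bbar]

lemma GammaBar_gcd_le {Γ : Subgroup PSL2Z} {N : ℕ} [NeZero N] {a b : ℤ} (c : SL2Z)
    (hN : GammaBar N ≤ Γ) (ha : projSL (c * upper a * c⁻¹) ∈ Γ)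
    (hb : projSL (c * lower b * c⁻¹) ∈ Γ) : GammaBar (Int.gcd N (a * b)) ≤ Γ := by
  let Δ := Γ.comap (projSL.comp (MulAut.conj c).toMonoidHom)
  have hΔ : Gamma (Int.gcd N (a * b)) ≤ Δ :=
    Gamma_gcd_le (fun y hy => hN (Subgroup.mem_map_of_mem _ ((Gamma_normal N).conj_mem y hy c)))
      ha hb
  rintro _ ⟨y, hy, rfl⟩
  simpa [Δ, mul_assoc] using hΔ ((Gamma_normal _).conj_mem y hy c⁻¹)

lemma exists_conj_upper_lower_mem {Γ : Subgroup PSL2Z} {g P : PSL2Z}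
    (hP : P = Bbar ∨ P = Abar * Bbar⁻¹) {d e : ℕ} (hd : g * Abar ^ d * g⁻¹ ∈ Γ)
    (he : g * P ^ e * g⁻¹ ∈ Γ) :
    ∃ c : SL2Z, projSL (c * upper (2 * d : ℤ) * c⁻¹) ∈ Γ ∧
      projSL (c * lower (2 * e : ℤ) * c⁻¹) ∈ Γ := by
  obtain ⟨g, rfl⟩ : ∃ g₀, projSL g₀ = g := QuotientGroup.mk'_surjective _ g
  rcases hP with rfl | rfl
  · refine ⟨g, ?_, ?_⟩
    · simpa [projSL_upper_two_mul] using hd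
    · simpa [projSL_lower_two_mul] using he
  · have hconj (x : SL2Z) : g * matT * x * (g * matT)⁻¹ = g * (matT * x * matT⁻¹) * g⁻¹ := by
      group
    refine ⟨g * matT, ?_, ?_⟩
    · rw [hconj, matT_conj_upper]
      simpa [projSL_upper_two_mul] using hd
    · rw [hconj]
      simpa [projSL_matT_conj_lower_two_mul] using he

lemma natCast_dvd_of_isLeast_level {Γ : Subgroup PSL2Z} {L : ℕ}
    (hL : IsLeast {N : ℕ | 0 < N ∧ GammaBar N ≤ Γ} L) {z : ℤ}
    (hz : GammaBar (Int.gcd L z) ≤ Γ) : (L : ℤ) ∣ z := by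
  have hdvd : Int.gcd L z ∣ L := by exact_mod_cast Int.gcd_dvd_left (L : ℤ) z
  have hpos : 0 < L := hL.1.1
  have heq : Int.gcd L z = L :=
    le_antisymm (Nat.le_of_dvd hpos hdvd) (hL.2 ⟨Nat.pos_of_dvd_of_pos hdvd hpos, hz⟩)
  simpa [heq] using Int.gcd_dvd_right (L : ℤ) z

theorem larcher_generalized_general (Γ : Subgroup PSL2Z) (n : ℕ)
    (hlevel : IsLeast {N : ℕ | 0 < N ∧ GammaBar N ≤ Γ} (2 * n))
    (g : PSL2Z) (P : PSL2Z) (hP : P = Bbar ∨ P = Abar * Bbar⁻¹)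
    (d e : ℕ)
    (hd : IsLeast {k : ℕ | 0 < k ∧ g * Abar ^ k * g⁻¹ ∈ Γ} d)
    (he : IsLeast {k : ℕ | 0 < k ∧ g * P ^ k * g⁻¹ ∈ Γ} e) :
    n ∣ 2 * d * e := by
  have : NeZero (2 * n) := ⟨hlevel.1.1.ne'⟩
  obtain ⟨c, hA, hB⟩ := exists_conj_upper_lower_mem hP hd.1.2 he.1.2
  have h2n : ((2 * n : ℕ) : ℤ) ∣ 2 * d * (2 * e) :=
    natCast_dvd_of_isLeast_level hlevel (GammaBar_gcd_le c hlevel.1.2 hA hB)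
  have h2n' : (2 : ℤ) * n ∣ 2 * (2 * d * e) := by convert h2n using 1 <;> push_cast <;> ring
  exact_mod_cast (mul_dvd_mul_iff_left two_ne_zero).mp h2n'

/-- Generalized Larcher criterion: let `Γ ≤ Γ̄(2)` be a finite-index congruence subgroup of
level `2n`, let `g ∈ Γ̄(2)` and let `P` be `B̄` or `ĀB̄⁻¹`. If `d` is the least positive
integer with `g·Ā^d·g⁻¹ ∈ Γ` and `e` the least positive integer with `g·P^e·g⁻¹ ∈ Γ`, then
`n ∣ 2·d·e`. -/
theorem larcher_generalized (Γ : Subgroup PSL2Z) (hsub : Γ ≤ GammaBar 2)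
    (hfin : Γ.relIndex (GammaBar 2) ≠ 0) (n : ℕ)
    (hlevel : IsLeast {N : ℕ | 0 < N ∧ GammaBar N ≤ Γ} (2 * n))
    (g : PSL2Z) (hg : g ∈ GammaBar 2) (P : PSL2Z) (hP : P = Bbar ∨ P = Abar * Bbar⁻¹)
    (d e : ℕ)
    (hd : IsLeast {k : ℕ | 0 < k ∧ g * Abar ^ k * g⁻¹ ∈ Γ} d)
    (he : IsLeast {k : ℕ | 0 < k ∧ g * P ^ k * g⁻¹ ∈ Γ} e) :
    n ∣ 2 * d * e :=
  larcher_generalized_general Γ n hlevel g P hP d e hd he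
end
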